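/- Let A be a finite abelian group and μ a stationary Markov measure on A^ℤ with transition matrix Q = (q^a_b) all of whose entries are strictly positive, and stationary vector ν. Then μ is harmonically mixing: for every ε > 0 there exists K such that every character of A^ℤ of rank > 2K has Fourier coefficient of modulus < ε. -/

import Mathlib

/-!
Fix a window `k, …, k + n` containing the support of `χ`. Summing over the cylinders of that window,
the Fourier coefficient `∫ χ dμ` equals `∑ₐ ν a · χₖ(a) · (Q M_{χ_{k+1}} Q ⋯ Q M_{χ_{k+n}} 1)(a)`,
where `M_ζ` is multiplication by `ζ`. On `(ℂ^A, ‖·‖_∞)` the stochastic matrix `Q` is a contraction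
and `M_ζ` an isometry. Moreover, since every entry of `Q` is at least some `q > 0`, `Q` strictly
shrinks every function that is far from constant, while `M_ζ` for a nontrivial `ζ` turns a
function that is close to a nonzero constant into one that is far from constant. Hence
`‖Q M_ζ Q‖ ≤ ρ < 1` uniformly over the finitely many nontrivial `ζ`, and pairing up the nontrivial
factors gives `‖∫ χ dμ‖ ≤ ρ ^ ⌊(rank χ - 1) / 2⌋`.
-/

open MeasureTheory

/-- Evaluation at `x` of the character of `A^ℤ` with coefficient system `χ`. -/
noncomputable def charEval {A : Type*} [AddCommGroup A] (χ : ℤ → AddChar A ℂ)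
    (x : ℤ → A) : ℂ :=
  ∏ᶠ i, χ i (x i)

open Finset
open scoped ENNReal

theorem exists_pos_le_of_finite {ι : Type*} [Finite ι] (f : ι → ℝ) (hf : ∀ i, 0 < f i) :
    ∃ c, 0 < c ∧ c ≤ 1 ∧ ∀ i, c ≤ f i := by
  cases isEmpty_or_nonempty ι
  · exact ⟨1, one_pos, le_rfl, isEmptyElim⟩
  obtain ⟨i₀, hi₀⟩ := Finite.exists_min f
  exact ⟨min 1 (f i₀), lt_min one_pos (hf i₀), min_le_left _ _,
    fun i => (min_le_right _ _).trans (hi₀ i)⟩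

theorem sub_le_norm_mul_sub_mul {R : Type*} [NormedDivisionRing R] {z₁ z₂ : R} (hz₁ : ‖z₁‖ ≤ 1)
    (hz₂ : ‖z₂‖ ≤ 1) (u₁ u₂ w : R) :
    ‖z₁ - z₂‖ * ‖w‖ - (‖u₁ - w‖ + ‖u₂ - w‖) ≤ ‖z₁ * u₁ - z₂ * u₂‖ := by
  have hdecomp : z₁ * u₁ - z₂ * u₂ = (z₁ - z₂) * w + (z₁ * (u₁ - w) - z₂ * (u₂ - w)) := by
    noncomm_ring
  have herr : ‖z₁ * (u₁ - w) - z₂ * (u₂ - w)‖ ≤ ‖u₁ - w‖ + ‖u₂ - w‖ := by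
    refine (norm_sub_le _ _).trans (add_le_add ?_ ?_) <;> rw [norm_mul] <;>
      exact mul_le_of_le_one_left (norm_nonneg _) ‹_›
  have hrev := norm_sub_norm_le ((z₁ - z₂) * w) (-(z₁ * (u₁ - w) - z₂ * (u₂ - w)))
  rw [sub_neg_eq_add, norm_neg, ← hdecomp, norm_mul] at hrev
  linarith

section Contraction

variable {A E : Type*} [Fintype A]

theorem norm_sum_smul_le_of_sum_eq_one [SeminormedAddCommGroup E] [NormedSpace ℝ E]
    {w : A → ℝ} (hw0 : ∀ a, 0 ≤ w a) (hw1 : ∑ a, w a = 1) (φ : A → E) :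
    ‖∑ a, w a • φ a‖ ≤ ‖φ‖ := by
  have hmem := (convex_closedBall (0 : E) ‖φ‖).sum_mem (fun a _ => hw0 a) hw1
    (fun a _ => mem_closedBall_zero_iff.2 (norm_le_pi_norm φ a))
  exact mem_closedBall_zero_iff.1 hmem

theorem norm_add_le_two_sub_sq [NormedAddCommGroup E] [InnerProductSpace ℝ E] {u v : E}
    (hu : ‖u‖ ≤ 1) (hv : ‖v‖ ≤ 1) : ‖u + v‖ ≤ 2 - ‖u - v‖ ^ 2 / 4 := by
  have hpar := parallelogram_law_with_norm ℝ u v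
  have hdiff : ‖u - v‖ ≤ 2 := (norm_sub_le u v).trans (by linarith)
  have hsq : ‖u + v‖ ^ 2 ≤ (2 - ‖u - v‖ ^ 2 / 4) ^ 2 := by
    nlinarith [norm_nonneg u, norm_nonneg v, pow_nonneg (norm_nonneg (u - v)) 4]
  refine (pow_le_pow_iff_left₀ (norm_nonneg _) ?_ two_ne_zero).1 hsq
  nlinarith [norm_nonneg (u - v)]

section Transition

variable [SeminormedAddCommGroup E] [NormedSpace ℝ E]

def transitionOp (Q : A → A → ℝ) (φ : A → E) : A → E := fun a => ∑ b, Q a b • φ b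

variable {Q : A → A → ℝ}

@[simp]
theorem transitionOp_zero : transitionOp Q (0 : A → E) = 0 := by
  ext a
  simp [transitionOp]

theorem transitionOp_smul (c : ℝ) (φ : A → E) :
    transitionOp Q (c • φ) = c • transitionOp Q φ := by
  ext a
  simp only [transitionOp, Pi.smul_apply, smul_sum, smul_comm c]

theorem transitionOp_apply_sub (hQ1 : ∀ a, ∑ b, Q a b = 1) (φ : A → E) (x : E) (a : A) :
    transitionOp Q φ a - x = transitionOp Q (fun b => φ b - x) a := by
  simp only [transitionOp, smul_sub, sum_sub_distrib, ← sum_smul, hQ1, one_smul]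

theorem norm_transitionOp_le (hQ0 : ∀ a b, 0 ≤ Q a b) (hQ1 : ∀ a, ∑ b, Q a b = 1)
    (φ : A → E) : ‖transitionOp Q φ‖ ≤ ‖φ‖ :=
  (pi_norm_le_iff_of_nonneg (norm_nonneg φ)).2 fun a =>
    norm_sum_smul_le_of_sum_eq_one (hQ0 a) (hQ1 a) φ

end Transition

theorem norm_transitionOp_apply_le_one_sub [NormedAddCommGroup E] [InnerProductSpace ℝ E]
    {Q : A → A → ℝ} (hQ0 : ∀ a b, 0 ≤ Q a b) (hQ1 : ∀ a, ∑ b, Q a b = 1) {q : ℝ} (hq0 : 0 ≤ q)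
    (hq : ∀ a b, q ≤ Q a b) {u : A → E} (hu : ‖u‖ ≤ 1) (a b₁ b₂ : A) :
    ‖transitionOp Q u a‖ ≤ 1 - q * ‖u b₁ - u b₂‖ ^ 2 / 4 := by
  classical
  rcases eq_or_ne b₁ b₂ with rfl | hne
  · simpa using (norm_le_pi_norm _ a).trans ((norm_transitionOp_le hQ0 hQ1 u).trans hu)
  have hsmul : ∀ {r : ℝ} (b : A), 0 ≤ r → ‖r • u b‖ ≤ r := fun b hr => by
    rw [norm_smul, Real.norm_of_nonneg hr]
    exact mul_le_of_le_one_right hr ((norm_le_pi_norm u b).trans hu)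
  have hub : ∀ b, ‖u b‖ ≤ 1 := fun b => (norm_le_pi_norm u b).trans hu
  have hdecomp : transitionOp Q u a = q • (u b₁ + u b₂)
      + ((Q a b₁ - q) • u b₁ + (Q a b₂ - q) • u b₂
        + ∑ b ∈ {b₁, b₂}ᶜ, Q a b • u b) := by
    rw [transitionOp, ← sum_add_sum_compl {b₁, b₂}, sum_pair hne, smul_add, sub_smul, sub_smul]
    abel
  have hmass := hQ1 a
  rw [← sum_add_sum_compl {b₁, b₂}, sum_pair hne] at hmass
  calc ‖transitionOp Q u a‖
      ≤ q * (2 - ‖u b₁ - u b₂‖ ^ 2 / 4) + ((Q a b₁ - q) + (Q a b₂ - q)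
        + ∑ b ∈ {b₁, b₂}ᶜ, Q a b) := by
        rw [hdecomp]
        refine (norm_add_le _ _).trans (add_le_add ?_ ?_)
        · rw [norm_smul, Real.norm_of_nonneg hq0]
          exact mul_le_mul_of_nonneg_left (norm_add_le_two_sub_sq (hub b₁) (hub b₂)) hq0
        · refine (norm_add_le _ _).trans (add_le_add ((norm_add_le _ _).trans
            (add_le_add (hsmul b₁ (by linarith [hq a b₁])) (hsmul b₂ (by linarith [hq a b₂]))))
            ((norm_sum_le _ _).trans (sum_le_sum fun b _ => hsmul b (hQ0 a b))))
    _ = 1 - q * ‖u b₁ - u b₂‖ ^ 2 / 4 := by linarith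

theorem norm_transitionOp_mul_transitionOp_le_one_sub {Q : A → A → ℝ} (hQ0 : ∀ a b, 0 ≤ Q a b)
    (hQ1 : ∀ a, ∑ b, Q a b = 1) {q : ℝ} (hq0 : 0 ≤ q) (hq : ∀ a b, q ≤ Q a b) {ζ φ : A → ℂ}
    (hζ : ‖ζ‖ ≤ 1) (hφ : ‖φ‖ ≤ 1) (b₁ b₂ : A) :
    ‖transitionOp Q (ζ * transitionOp Q φ)‖ ≤ 1 - q * ‖ζ b₁ - ζ b₂‖ ^ 2 / 256 := by
  set δ := ‖ζ b₁ - ζ b₂‖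
  set ψ := transitionOp Q φ
  have hpt : ∀ {f : A → ℂ} (b : A), ‖f‖ ≤ 1 → ‖f b‖ ≤ 1 := fun b hf =>
    (norm_le_pi_norm _ b).trans hf
  have hq1 : q ≤ 1 := (hq b₁ b₁).trans <| (hQ1 b₁).symm ▸
    single_le_sum (fun b _ => hQ0 b₁ b) (mem_univ b₁)
  have hδ2 : δ ≤ 2 := (norm_sub_le _ _).trans (by linarith [hpt b₁ hζ, hpt b₂ hζ])
  have hψ : ‖ψ‖ ≤ 1 := (norm_transitionOp_le hQ0 hQ1 φ).trans hφ
  have hζψ : ‖ζ * ψ‖ ≤ ‖ψ‖ :=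
    (norm_mul_le ζ ψ).trans (mul_le_of_le_one_left (norm_nonneg ψ) hζ)
  have hPζψ := (norm_transitionOp_le hQ0 hQ1 (ζ * ψ)).trans hζψ
  have hqδ : q * δ ^ 2 ≤ 4 := by nlinarith [norm_nonneg (ζ b₁ - ζ b₂)]
  have hρ0 : 0 ≤ 1 - q * δ ^ 2 / 256 := by linarith
  -- with the threshold `δ / 8` both nontrivial cases below gain at least `q δ² / 256`
  by_cases hosc : ∃ d₁ d₂, δ / 8 ≤ ‖φ d₁ - φ d₂‖
  · obtain ⟨d₁, d₂, hd⟩ := hosc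
    refine hPζψ.trans <| (pi_norm_le_iff_of_nonneg hρ0).2 fun a =>
      (norm_transitionOp_apply_le_one_sub hQ0 hQ1 hq0 hq hφ a d₁ d₂).trans ?_
    nlinarith [mul_le_mul_of_nonneg_left (pow_le_pow_left₀ (by positivity) hd 2) hq0]
  push Not at hosc
  have hnear : ∀ b, ‖ψ b - φ b₂‖ ≤ δ / 8 := fun b => by
    rw [transitionOp_apply_sub hQ1]
    refine (norm_le_pi_norm _ b).trans ((norm_transitionOp_le hQ0 hQ1 _).trans ?_)
    exact (pi_norm_le_iff_of_nonneg (by positivity)).2 fun d => (hosc d b₂).le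
  by_cases hsmall : ‖φ b₂‖ ≤ 1 / 2
  · have : ‖ψ‖ ≤ 3 / 4 := (pi_norm_le_iff_of_nonneg (by norm_num)).2 fun b =>
      (norm_le_norm_sub_add (ψ b) (φ b₂)).trans (by linarith [hnear b])
    linarith
  -- now `ψ` is close to the constant `φ b₂ ≠ 0`, so `ζ * ψ` inherits the oscillation of `ζ`
  have hsep : δ / 4 ≤ ‖(ζ * ψ) b₁ - (ζ * ψ) b₂‖ := by
    have := sub_le_norm_mul_sub_mul (hpt b₁ hζ) (hpt b₂ hζ) (ψ b₁) (ψ b₂) (φ b₂)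
    have hlarge : δ / 2 ≤ δ * ‖φ b₂‖ := by nlinarith [norm_nonneg (ζ b₁ - ζ b₂)]
    rw [Pi.mul_apply, Pi.mul_apply]
    linarith [hnear b₁, hnear b₂]
  refine (pi_norm_le_iff_of_nonneg hρ0).2 fun a =>
    (norm_transitionOp_apply_le_one_sub hQ0 hQ1 hq0 hq (hζψ.trans hψ) a b₁ b₂).trans ?_
  nlinarith [mul_le_mul_of_nonneg_left (pow_le_pow_left₀ (by positivity) hsep 2) hq0]

theorem norm_transitionOp_mul_transitionOp_le {Q : A → A → ℝ} (hQ0 : ∀ a b, 0 ≤ Q a b)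
    (hQ1 : ∀ a, ∑ b, Q a b = 1) {q : ℝ} (hq0 : 0 ≤ q) (hq : ∀ a b, q ≤ Q a b) {ζ : A → ℂ}
    (hζ : ‖ζ‖ ≤ 1) (φ : A → ℂ) (b₁ b₂ : A) :
    ‖transitionOp Q (ζ * transitionOp Q φ)‖ ≤ (1 - q * ‖ζ b₁ - ζ b₂‖ ^ 2 / 256) * ‖φ‖ := by
  rcases eq_or_ne φ 0 with rfl | hφ
  · simp
  have hr : 0 < ‖φ‖ := norm_pos_iff.2 hφ
  have hunit : ‖‖φ‖⁻¹ • φ‖ ≤ 1 := by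
    rw [norm_smul, norm_inv, norm_norm, inv_mul_cancel₀ hr.ne']
  have key := norm_transitionOp_mul_transitionOp_le_one_sub hQ0 hQ1 hq0 hq hζ hunit b₁ b₂
  rw [transitionOp_smul, mul_smul_comm, transitionOp_smul, norm_smul, norm_inv, norm_norm,
    inv_mul_le_iff₀ hr] at key
  linarith

end Contraction

section Transfer

variable {A : Type*} [AddCommGroup A]

open Classical in
noncomputable def charRank (n : ℕ) (c : ℕ → AddChar A ℂ) : ℕ := #{i ∈ range n | c i ≠ 1}

theorem charRank_le (n : ℕ) (c : ℕ → AddChar A ℂ) : charRank n c ≤ n :=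
  (card_filter_le _ _).trans (card_range n).le

theorem charRank_succ (n : ℕ) (c : ℕ → AddChar A ℂ) :
    charRank (n + 1) c = (if c 0 ≠ 1 then 1 else 0) + charRank n fun i => c (i + 1) := by
  classical
  simp only [charRank, card_filter, sum_range_succ', add_comm]

variable [Fintype A] {Q : A → A → ℝ}

theorem norm_coe_addChar_le_one (ζ : AddChar A ℂ) : ‖(ζ : A → ℂ)‖ ≤ 1 :=
  (pi_norm_le_iff_of_nonneg zero_le_one).2 fun b => (AddChar.norm_apply ζ b).le

theorem norm_coe_addChar_mul_le (ζ : AddChar A ℂ) (φ : A → ℂ) : ‖⇑ζ * φ‖ ≤ ‖φ‖ :=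
  (norm_mul_le _ _).trans (mul_le_of_le_one_left (norm_nonneg φ) (norm_coe_addChar_le_one ζ))

-- `iterTransfer Q n c = Q M_{c 0} Q M_{c 1} ⋯ Q M_{c (n - 1)} 1`
variable (Q) in
noncomputable def iterTransfer : ℕ → (ℕ → AddChar A ℂ) → A → ℂ
  | 0, _ => 1
  | n + 1, c => transitionOp Q (⇑(c 0) * iterTransfer n fun i => c (i + 1))

variable (hQ0 : ∀ a b, 0 ≤ Q a b) (hQ1 : ∀ a, ∑ b, Q a b = 1)
include hQ0 hQ1

theorem norm_iterTransfer_succ_le (n : ℕ) (c : ℕ → AddChar A ℂ) :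
    ‖iterTransfer Q (n + 1) c‖ ≤ ‖iterTransfer Q n fun i => c (i + 1)‖ :=
  (norm_transitionOp_le hQ0 hQ1 _).trans (norm_coe_addChar_mul_le _ _)

theorem norm_iterTransfer_le_one (n : ℕ) (c : ℕ → AddChar A ℂ) : ‖iterTransfer Q n c‖ ≤ 1 := by
  induction n generalizing c with
  | zero => exact (pi_norm_le_iff_of_nonneg zero_le_one).2 fun _ => by simp [iterTransfer]
  | succ n ih => exact (norm_iterTransfer_succ_le hQ0 hQ1 n c).trans (ih _)

theorem norm_iterTransfer_le {ρ : ℝ} (hρ0 : 0 ≤ ρ) (hρ1 : ρ ≤ 1)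
    (hcontr : ∀ ζ : AddChar A ℂ, ζ ≠ 1 → ∀ φ : A → ℂ,
      ‖transitionOp Q (⇑ζ * transitionOp Q φ)‖ ≤ ρ * ‖φ‖) (n : ℕ) (c : ℕ → AddChar A ℂ) :
    ‖iterTransfer Q n c‖ ≤ ρ ^ (charRank n c / 2) := by
  induction n using Nat.strong_induction_on generalizing c with
  | _ n ih =>
  match n with
  | 0 | 1 =>
    rw [Nat.div_eq_of_lt ((charRank_le _ c).trans_lt (by norm_num)), pow_zero]
    exact norm_iterTransfer_le_one hQ0 hQ1 _ c
  | m + 1 + 1 =>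
    by_cases hc : c 0 = 1
    · refine (norm_iterTransfer_succ_le hQ0 hQ1 _ c).trans
        ((ih (m + 1) (by omega) _).trans_eq ?_)
      rw [charRank_succ (m + 1) c, if_neg (not_not.2 hc), zero_add]
    have hrank := charRank_succ (m + 1) c
    rw [charRank_succ m] at hrank
    calc ‖iterTransfer Q (m + 1 + 1) c‖
        ≤ ρ * ‖⇑(c 1) * iterTransfer Q m fun i => c (i + 1 + 1)‖ := hcontr (c 0) hc _
      _ ≤ ρ * ρ ^ (charRank m (fun i => c (i + 1 + 1)) / 2) :=
        mul_le_mul_of_nonneg_left ((norm_coe_addChar_mul_le _ _).trans (ih m (by omega) _)) hρ0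
      _ ≤ ρ ^ (charRank (m + 1 + 1) c / 2) := by
        rw [← pow_succ']
        refine pow_le_pow_of_le_one hρ0 hρ1 ?_
        split_ifs at hrank <;> omega

end Transfer

theorem exists_contraction_of_pos {A : Type*} [AddCommGroup A] [Fintype A] {Q : A → A → ℝ}
    (hQ : ∀ a b, 0 < Q a b) (hQ1 : ∀ a, ∑ b, Q a b = 1) :
    ∃ ρ, 0 ≤ ρ ∧ ρ < 1 ∧ ∀ ζ : AddChar A ℂ, ζ ≠ 1 → ∀ φ : A → ℂ,
      ‖transitionOp Q (⇑ζ * transitionOp Q φ)‖ ≤ ρ * ‖φ‖ := by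
  obtain ⟨q, hq0, hq1, hq⟩ := exists_pos_le_of_finite (fun p : A × A => Q p.1 p.2)
    fun p => hQ p.1 p.2
  obtain ⟨δ, hδ0, hδ1, hδ⟩ := exists_pos_le_of_finite
    (fun p : {p : AddChar A ℂ × A // p.1 p.2 ≠ 1} => ‖p.1.1 p.1.2 - 1‖)
    fun p => norm_pos_iff.2 (sub_ne_zero.2 p.2)
  have hqδ : 0 < q * δ ^ 2 := by positivity
  refine ⟨1 - q * δ ^ 2 / 256, by nlinarith, by linarith, fun ζ hζ φ => ?_⟩
  obtain ⟨b, hb⟩ := AddChar.ne_one_iff.1 hζ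
  refine (norm_transitionOp_mul_transitionOp_le (fun a b => (hQ a b).le) hQ1 hq0.le
    (fun a b => hq (a, b)) (norm_coe_addChar_le_one ζ) φ b 0).trans ?_
  rw [AddChar.map_zero_eq_one]
  have := hδ ⟨(ζ, b), hb⟩
  gcongr

section Paths

variable {A : Type*}

def pathWeight (ν : A → ℝ) (Q : A → A → ℝ) {n : ℕ} (v : Fin (n + 1) → A) : ℝ :=
  ν (v 0) * ∏ i : Fin n, Q (v i.castSucc) (v i.succ)

theorem pathWeight_cons (ν : A → ℝ) (Q : A → A → ℝ) {n : ℕ} (a : A) (v : Fin (n + 1) → A) :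
    pathWeight ν Q (Fin.cons a v : Fin (n + 1 + 1) → A)
      = pathWeight (fun b => ν a * Q a b) Q v := by
  simp [pathWeight, Fin.prod_univ_succ, mul_assoc]

variable [Fintype A]

theorem sum_pathWeight {Q : A → A → ℝ} (hQ1 : ∀ a, ∑ b, Q a b = 1) (ν : A → ℝ) (n : ℕ) :
    ∑ v : Fin (n + 1) → A, pathWeight ν Q v = ∑ a, ν a := by
  induction n generalizing ν with
  | zero =>
    exact Fintype.sum_equiv (Equiv.funUnique (Fin 1) A) _ _ fun v => by simp [pathWeight]
  | succ n ih =>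
    rw [← Fintype.sum_equiv (Fin.consEquiv fun _ => A)
      (fun p => pathWeight ν Q (Fin.cons p.1 p.2 : Fin (n + 1 + 1) → A)) _ fun _ => rfl,
      Fintype.sum_prod_type]
    simp only [pathWeight_cons, ih, ← mul_sum, hQ1, mul_one]

variable [AddCommGroup A]

theorem sum_pathWeight_smul_prod (ν : A → ℝ) (Q : A → A → ℝ) (n : ℕ) (c : ℕ → AddChar A ℂ) :
    ∑ v : Fin (n + 1) → A, pathWeight ν Q v • ∏ i : Fin (n + 1), c i (v i)
      = ∑ a, ν a • (⇑(c 0) * iterTransfer Q n fun i => c (i + 1)) a := by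
  induction n generalizing ν c with
  | zero =>
    refine Fintype.sum_equiv (Equiv.funUnique (Fin 1) A) _ _ fun v => ?_
    simp [pathWeight, iterTransfer]
  | succ n ih =>
    let F (v : Fin (n + 1 + 1) → A) := pathWeight ν Q v • ∏ i : Fin (n + 1 + 1), c i (v i)
    rw [← Fintype.sum_equiv (Fin.consEquiv fun _ => A) (fun p => F (Fin.cons p.1 p.2)) F
      fun _ => rfl, Fintype.sum_prod_type]
    refine sum_congr rfl fun a _ => ?_
    have hF : ∀ v, F (Fin.cons a v) = c 0 a
        * (pathWeight (fun b => ν a * Q a b) Q v • ∏ i : Fin (n + 1), c (i + 1) (v i)) :=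
      fun v => by
        simp only [F, pathWeight_cons, Fin.prod_univ_succ (n := n + 1), Fin.cons_zero,
          Fin.cons_succ, Fin.val_zero, Fin.val_succ, mul_smul_comm]
    simp only [hF, ← mul_sum]
    rw [ih (fun b => ν a * Q a b) (fun i => c (i + 1))]
    simp only [iterTransfer, transitionOp, Pi.mul_apply, mul_smul, ← smul_sum, mul_smul_comm]

end Paths

section Cover

variable {X ι : Type*} [MeasurableSpace X] {μ : Measure X} [IsFiniteMeasure μ] [Fintype ι]

theorem ae_index_unique_of_sum_measure_le {t : ι → Set X} (ht : ∀ i, MeasurableSet (t i))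
    (hcover : ∀ x, ∃ i, x ∈ t i) (hsum : ∑ i, μ (t i) ≤ μ Set.univ) :
    ∀ᵐ x ∂μ, ∀ i j, x ∈ t i → x ∈ t j → i = j := by
  classical
  set N : X → ℝ≥0∞ := fun x => ∑ i, (t i).indicator 1 x
  have hN : ∫⁻ x, N x ∂μ ≤ ∫⁻ _, 1 ∂μ := by
    rw [lintegral_finsetSum _ fun i _ => measurable_one.indicator (ht i)]
    simpa [lintegral_indicator_one (ht _)] using hsum
  have h1N : (fun _ => 1) ≤ᵐ[μ] N := ae_of_all _ fun x => by
    obtain ⟨i, hi⟩ := hcover x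
    exact (Set.indicator_of_mem hi 1).symm.le.trans
      (single_le_sum (f := fun j => (t j).indicator 1 x) (fun j _ => zero_le) (mem_univ i))
  have hNeq := ae_eq_of_ae_le_of_lintegral_le h1N (by simp [measure_ne_top])
    (Finset.measurable_sum _ fun i _ => measurable_one.indicator (ht i)).aemeasurable hN
  filter_upwards [hNeq] with x hx i j hi hj
  by_contra hij
  have h2 : ∑ k ∈ {i, j}, (t k).indicator 1 x ≤ N x := sum_le_sum_of_subset (subset_univ _)
  rw [sum_pair hij, Set.indicator_of_mem hi, Set.indicator_of_mem hj, ← hx] at h2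
  norm_num at h2

-- The pieces `s i` need not be measurable: as the σ-algebra on `A` is arbitrary, cylinder sets
-- of `ℤ → A` need not be measurable either.
theorem integral_eq_sum_of_forall_mem {E : Type*} [NormedAddCommGroup E] [NormedSpace ℝ E]
    [CompleteSpace E]
    {s : ι → Set X} (hcover : ∀ x, ∃ i, x ∈ s i) (hsum : ∑ i, μ (s i) ≤ μ Set.univ)
    {f : X → E} {w : ι → E} (hf : ∀ i, ∀ x ∈ s i, f x = w i) :
    ∫ x, f x ∂μ = ∑ i, μ.real (s i) • w i := by
  classical
  set t := fun i => toMeasurable μ (s i)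
  have ht : ∀ i, MeasurableSet (t i) := fun i => measurableSet_toMeasurable μ (s i)
  have hst : ∀ i, s i ⊆ t i := fun i => subset_toMeasurable μ (s i)
  have hunique := ae_index_unique_of_sum_measure_le (μ := μ) ht
    (fun x => (hcover x).imp fun i hi => hst i hi) (by simpa [t, measure_toMeasurable] using hsum)
  have hae : f =ᵐ[μ] fun x => ∑ i, (t i).indicator (fun _ => w i) x := by
    filter_upwards [hunique] with x hx
    obtain ⟨j, hj⟩ := hcover x
    rw [sum_eq_single j (fun i _ hij => Set.indicator_of_notMem
      (fun hi => hij (hx i j hi (hst j hj))) _) (fun h => absurd (mem_univ j) h),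
      Set.indicator_of_mem (hst j hj), hf j x hj]
  rw [integral_congr_ae hae,
    integral_finsetSum _ fun i _ => (integrable_const (w i)).indicator (ht i)]
  refine sum_congr rfl fun i _ => ?_
  rw [integral_indicator_const _ (ht i), measureReal_def, measureReal_def, measure_toMeasurable]

end Cover

theorem Set.Finite.exists_subset_Icc_add {S : Set ℤ} (hS : S.Finite) :
    ∃ (k : ℤ) (n : ℕ), S ⊆ Set.Icc k (k + n) := by
  obtain ⟨k, hk⟩ := hS.bddBelow
  obtain ⟨M, hM⟩ := hS.bddAbove
  exact ⟨k, (M - k).toNat, fun j hj => ⟨hk hj, by have := hM hj; omega⟩⟩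

section Window

variable {A : Type*} [AddCommGroup A] {χ : ℤ → AddChar A ℂ} {k : ℤ} {n : ℕ}

theorem charEval_eq_prod (hχ : {j | χ j ≠ 1} ⊆ Set.Icc k (k + n)) (x : ℤ → A) :
    charEval χ x = ∏ i : Fin (n + 1), χ (k + (i : ℕ)) (x (k + (i : ℕ))) := by
  let e : ℕ ↪ ℤ := ⟨fun i => k + i, fun i j h => by simpa using h⟩
  rw [charEval, finprod_eq_prod_of_mulSupport_subset (s := (range (n + 1)).map e), prod_map,
    Fin.prod_univ_eq_prod_range (fun i : ℕ => χ (k + i) (x (k + i)))]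
  · rfl
  intro j hj
  obtain ⟨h1, h2⟩ := hχ (show χ j ≠ 1 from fun h => hj (by simp [h]))
  simp only [coe_map, coe_range, Set.mem_image, Set.mem_Iio]
  exact ⟨(j - k).toNat, by omega, show k + ((j - k).toNat : ℤ) = j by omega⟩

theorem ncard_ne_one_eq_charRank (hχ : {j | χ j ≠ 1} ⊆ Set.Icc k (k + n)) :
    {j | χ j ≠ 1}.ncard = charRank (n + 1) fun i => χ (k + i) := by
  classical
  have himage : {j | χ j ≠ 1}
      = (fun i : ℕ => k + i) '' ({i ∈ range (n + 1) | χ (k + i) ≠ 1} : Finset ℕ) := by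
    ext j
    simp only [Set.mem_ofPred_eq, coe_filter, mem_range, Set.mem_image]
    refine ⟨fun hj => ?_, fun ⟨i, ⟨_, hi⟩, hij⟩ => hij ▸ hi⟩
    obtain ⟨h1, h2⟩ := hχ hj
    refine ⟨(j - k).toNat, ⟨by omega, ?_⟩, by omega⟩
    rwa [show k + ((j - k).toNat : ℤ) = j by omega]
  rw [himage, Set.ncard_image_of_injective _ fun i j h => by simpa using h, Set.ncard_coe_finset,
    charRank]

def pathCylinder {α : Type*} (k : ℤ) {n : ℕ} (v : Fin (n + 1) → α) : Set (ℤ → α) :=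
  {x | ∀ i : Fin (n + 1), x (k + (i : ℕ)) = v i}

end Window

def IsMarkovMeasure {A : Type*} [MeasurableSpace A] (μ : Measure (ℤ → A)) (ν : A → ℝ)
    (Q : A → A → ℝ) : Prop :=
  ∀ (k : ℤ) (n : ℕ) (f : ℕ → A), μ {x | ∀ i : ℕ, i ≤ n → x (k + i) = f i}
    = ENNReal.ofReal (ν (f 0) * ∏ i ∈ range n, Q (f i) (f (i + 1)))

theorem measure_pathCylinder {A : Type*} [MeasurableSpace A] {μ : Measure (ℤ → A)} {ν : A → ℝ}
    {Q : A → A → ℝ} (hμ : IsMarkovMeasure μ ν Q)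
    (k : ℤ) {n : ℕ} (v : Fin (n + 1) → A) :
    μ (pathCylinder k v) = ENNReal.ofReal (pathWeight ν Q v) := by
  set f : ℕ → A := Function.extend Fin.val v fun _ => v 0
  have hf : ∀ i : Fin (n + 1), f i = v i := Fin.val_injective.extend_apply v _
  have hcyl : pathCylinder k v = {x | ∀ i : ℕ, i ≤ n → x (k + i) = f i} := by
    ext x
    refine ⟨fun hx i hi => ?_, fun hx i => (hx i (Nat.lt_succ_iff.1 i.2)).trans (hf i)⟩
    simpa [hf ⟨i, Nat.lt_succ_of_le hi⟩] using hx ⟨i, Nat.lt_succ_of_le hi⟩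
  rw [hcyl, hμ k n f, pathWeight, ← Fin.prod_univ_eq_prod_range (fun i => Q (f i) (f (i + 1)))]
  have hstep : ∀ i : Fin n, Q (f i) (f (i + 1)) = Q (v i.castSucc) (v i.succ) := fun i => by
    change Q (f i.castSucc) (f i.succ) = _
    rw [hf, hf]
  rw [prod_congr rfl fun i _ => hstep i, ← hf 0]
  rfl

theorem integral_charEval_eq_sum_pathWeight {A : Type*} [AddCommGroup A] [Fintype A]
    [MeasurableSpace A] {μ : Measure (ℤ → A)} [IsProbabilityMeasure μ] {ν : A → ℝ}
    {Q : A → A → ℝ} (hμ : IsMarkovMeasure μ ν Q)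
    (hν0 : ∀ a, 0 ≤ ν a) (hν1 : ∑ a, ν a = 1) (hQ0 : ∀ a b, 0 ≤ Q a b)
    (hQ1 : ∀ a, ∑ b, Q a b = 1) {χ : ℤ → AddChar A ℂ} {k : ℤ} {n : ℕ}
    (hχ : {j | χ j ≠ 1} ⊆ Set.Icc k (k + n)) :
    ∫ x, charEval χ x ∂μ
      = ∑ v : Fin (n + 1) → A, pathWeight ν Q v • ∏ i : Fin (n + 1), χ (k + (i : ℕ)) (v i) := by
  have hw0 : ∀ v : Fin (n + 1) → A, 0 ≤ pathWeight ν Q v := fun v =>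
    mul_nonneg (hν0 _) (prod_nonneg fun i _ => hQ0 _ _)
  have hmass : ∑ v : Fin (n + 1) → A, μ (pathCylinder k v) ≤ μ Set.univ := by
    simp only [measure_pathCylinder hμ, measure_univ]
    rw [← ENNReal.ofReal_sum_of_nonneg fun v _ => hw0 v, sum_pathWeight hQ1, hν1,
      ENNReal.ofReal_one]
  rw [integral_eq_sum_of_forall_mem (s := pathCylinder k)
    (w := fun v => ∏ i : Fin (n + 1), χ (k + (i : ℕ)) (v i))
    (fun x => ⟨fun i => x (k + (i : ℕ)), fun i => rfl⟩) hmass fun v x hx => by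
      rw [charEval_eq_prod hχ]; exact prod_congr rfl fun i _ => by rw [hx i]]
  simp only [measureReal_def, measure_pathCylinder hμ, ENNReal.toReal_ofReal (hw0 _)]

theorem markov_harmonically_mixing_general (A : Type*) [AddCommGroup A] [Fintype A]
    [MeasurableSpace A]
    (Q : A → A → ℝ) (hQpos : ∀ a b, 0 < Q a b) (hQrow : ∀ a, ∑ b, Q a b = 1)
    (ν : A → ℝ) (hν0 : ∀ a, 0 ≤ ν a) (hν1 : ∑ a, ν a = 1)
    (μ : Measure (ℤ → A)) [IsProbabilityMeasure μ]
    (hμ : ∀ (k : ℤ) (n : ℕ) (f : ℕ → A),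
      μ {x | ∀ i : ℕ, i ≤ n → x (k + i) = f i}
        = ENNReal.ofReal (ν (f 0) * ∏ i ∈ Finset.range n, Q (f i) (f (i + 1)))) :
    ∀ ε > 0, ∃ K : ℕ, ∀ χ : ℤ → AddChar A ℂ, {i | χ i ≠ 1}.Finite →
      2 * K < {i | χ i ≠ 1}.ncard → ‖∫ x, charEval χ x ∂μ‖ < ε := by
  intro ε hε
  have hQ0 : ∀ a b, 0 ≤ Q a b := fun a b => (hQpos a b).le
  obtain ⟨ρ, hρ0, hρ1, hcontr⟩ := exists_contraction_of_pos hQpos hQrow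
  obtain ⟨K, hK⟩ := exists_pow_lt_of_lt_one hε hρ1
  refine ⟨K, fun χ hfin hrank => ?_⟩
  obtain ⟨k, n, hχ⟩ := hfin.exists_subset_Icc_add
  set c : ℕ → AddChar A ℂ := fun i => χ (k + i)
  have hK' : K ≤ charRank n (fun i => c (i + 1)) / 2 := by
    rw [ncard_ne_one_eq_charRank hχ, charRank_succ] at hrank
    simp only [c]
    split_ifs at hrank <;> omega
  calc ‖∫ x, charEval χ x ∂μ‖
      = ‖∑ v : Fin (n + 1) → A, pathWeight ν Q v • ∏ i : Fin (n + 1), c i (v i)‖ := by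
        rw [integral_charEval_eq_sum_pathWeight hμ hν0 hν1 hQ0 hQrow hχ]
    _ = ‖∑ a, ν a • (⇑(c 0) * iterTransfer Q n fun i => c (i + 1)) a‖ := by
        rw [sum_pathWeight_smul_prod]
    _ ≤ ‖iterTransfer Q n fun i => c (i + 1)‖ :=
        (norm_sum_smul_le_of_sum_eq_one hν0 hν1 _).trans (norm_coe_addChar_mul_le _ _)
    _ ≤ ρ ^ (charRank n (fun i => c (i + 1)) / 2) :=
        norm_iterTransfer_le hQ0 hQrow hρ0 hρ1.le hcontr n _
    _ ≤ ρ ^ K := pow_le_pow_of_le_one hρ0 hρ1.le hK'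
    _ < ε := hK

/-- A stationary Markov measure on `A^ℤ` whose transition matrix has all entries
strictly positive is harmonically mixing: for every `ε > 0` there is `K` such
that every character of rank `> 2K` has Fourier coefficient of modulus `< ε`. -/
theorem markov_harmonically_mixing (A : Type*) [AddCommGroup A] [Fintype A]
    [MeasurableSpace A]
    (Q : A → A → ℝ) (hQpos : ∀ a b, 0 < Q a b) (hQrow : ∀ a, ∑ b, Q a b = 1)
    (ν : A → ℝ) (hν0 : ∀ a, 0 ≤ ν a) (hν1 : ∑ a, ν a = 1)
    (hstat : ∀ b, ∑ a, ν a * Q a b = ν b)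
    (μ : Measure (ℤ → A)) [IsProbabilityMeasure μ]
    (hμ : ∀ (k : ℤ) (n : ℕ) (f : ℕ → A),
      μ {x | ∀ i : ℕ, i ≤ n → x (k + i) = f i}
        = ENNReal.ofReal (ν (f 0) * ∏ i ∈ Finset.range n, Q (f i) (f (i + 1)))) :
    ∀ ε > 0, ∃ K : ℕ, ∀ χ : ℤ → AddChar A ℂ, {i | χ i ≠ 1}.Finite →
      2 * K < {i | χ i ≠ 1}.ncard → ‖∫ x, charEval χ x ∂μ‖ < ε :=
  markov_harmonically_mixing_general A Q hQpos hQrow ν hν0 hν1 μ hμ
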